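/- arXiv:1908.08587 — 3 statements merged into one kernel-verified Lean document; each statement's English description precedes it below -/
import Mathlib

section
/- Let $f$ be a nonnegative measurable function on $(0,\infty)$ and let $1<p<\infty$. Then $\int_0^{\infty}\left(\frac{1}{t}\int_0^t f(s)\,ds\right)^p \frac{dt}{t} \le \int_0^{\infty} f(t)^p \frac{dt}{t}$. -/
/-!
By Jensen's inequality the `p`-th power of the average of `f` over `(0, t)` is at most the average
of `f ^ p` over `(0, t)`. Integrating against `dt / t` and swapping the integrals,
`∫₀^∞ (∫₀ᵗ f ^ p) dt / t² = ∫₀^∞ f(s) ^ p (∫ₛ^∞ dt / t²) ds = ∫₀^∞ f(s) ^ p ds / s`.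
-/

open MeasureTheory Set
open scoped ENNReal

namespace ENNReal

variable {α : Type*} [MeasurableSpace α]

theorem rpow_lintegral_le_measure_univ_rpow_mul (μ : Measure α) {p : ℝ} (hp : 1 < p)
    {f : α → ℝ≥0∞} (hf : AEMeasurable f μ) :
    (∫⁻ a, f a ∂μ) ^ p ≤ μ univ ^ (p - 1) * ∫⁻ a, f a ^ p ∂μ := by
  have hpq := Real.HolderConjugate.conjExponent hp
  have hp0 : 0 ≤ p := hpq.nonneg
  have holder : ∫⁻ a, f a ∂μ ≤ (∫⁻ a, f a ^ p ∂μ) ^ (1 / p) * μ univ ^ (1 / p.conjExponent) := by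
    simpa using lintegral_mul_le_Lp_mul_Lq μ hpq hf aemeasurable_const (g := 1)
  calc (∫⁻ a, f a ∂μ) ^ p
      ≤ ((∫⁻ a, f a ^ p ∂μ) ^ (1 / p) * μ univ ^ (1 / p.conjExponent)) ^ p := by gcongr
    _ = μ univ ^ (p - 1) * ∫⁻ a, f a ^ p ∂μ := by
      rw [mul_rpow_of_nonneg _ _ hp0, ← rpow_mul, ← rpow_mul, one_div_mul_cancel hpq.ne_zero,
        rpow_one, one_div, ← div_eq_inv_mul, hpq.div_conj_eq_sub_one, mul_comm]

theorem rpow_laverage_le_laverage_rpow (μ : Measure α) {p : ℝ} (hp : 1 < p)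
    {f : α → ℝ≥0∞} (hf : AEMeasurable f μ) :
    (⨍⁻ a, f a ∂μ) ^ p ≤ ⨍⁻ a, f a ^ p ∂μ := by
  set ν := (μ univ)⁻¹ • μ
  have hν : ν univ ≤ 1 := by
    simp only [ν, Measure.smul_apply, smul_eq_mul]
    exact ENNReal.inv_mul_le_one _
  calc (⨍⁻ a, f a ∂μ) ^ p ≤ ν univ ^ (p - 1) * ⨍⁻ a, f a ^ p ∂μ :=
        rpow_lintegral_le_measure_univ_rpow_mul ν hp (hf.smul_measure _)
    _ ≤ ⨍⁻ a, f a ^ p ∂μ :=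
        mul_le_of_le_one_left' (rpow_le_one hν (by linarith))

end ENNReal

theorem setLIntegral_Ioi_lintegral_Ioo_mul_eq (μ ν : Measure ℝ) [SFinite μ] [SFinite ν]
    (a : ℝ) {g w : ℝ → ℝ≥0∞} (hg : Measurable g) (hw : Measurable w) :
    ∫⁻ t in Ioi a, (∫⁻ s in Ioo a t, g s ∂μ) * w t ∂ν
      = ∫⁻ s in Ioi a, g s * ∫⁻ t in Ioi s, w t ∂ν ∂μ := by
  let F : ℝ → ℝ → ℝ≥0∞ := fun t s => (Ioi s).indicator w t * g s
  have hF : Measurable (Function.uncurry F) :=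
    ((hw.comp measurable_fst).indicator (measurableSet_lt measurable_snd measurable_fst)).mul
      (hg.comp measurable_snd)
  have inner_s (t : ℝ) : ∫⁻ s in Ioi a, F t s ∂μ = (∫⁻ s in Ioo a t, g s ∂μ) * w t := by
    have : F t = (Iio t).indicator fun s => g s * w t := by
      ext s
      by_cases h : s < t <;> simp [F, h, mul_comm]
    rw [this, lintegral_indicator measurableSet_Iio, Measure.restrict_restrict measurableSet_Iio,
      inter_comm, Ioi_inter_Iio, lintegral_mul_const _ hg]
  have inner_t (s : ℝ) (hs : a < s) :
      ∫⁻ t in Ioi a, F t s ∂ν = g s * ∫⁻ t in Ioi s, w t ∂ν := by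
    rw [lintegral_mul_const _ (hw.indicator measurableSet_Ioi), mul_comm,
      lintegral_indicator measurableSet_Ioi, Measure.restrict_restrict measurableSet_Ioi,
      inter_eq_left.2 (Ioi_subset_Ioi hs.le)]
  calc ∫⁻ t in Ioi a, (∫⁻ s in Ioo a t, g s ∂μ) * w t ∂ν
      = ∫⁻ t in Ioi a, ∫⁻ s in Ioi a, F t s ∂μ ∂ν := by simp_rw [inner_s]
    _ = ∫⁻ s in Ioi a, ∫⁻ t in Ioi a, F t s ∂ν ∂μ := lintegral_lintegral_swap hF.aemeasurable
    _ = ∫⁻ s in Ioi a, g s * ∫⁻ t in Ioi s, w t ∂ν ∂μ :=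
      setLIntegral_congr_fun measurableSet_Ioi inner_t

theorem lintegral_Ioi_inv_sq {s : ℝ} (hs : 0 < s) :
    ∫⁻ t in Ioi s, (ENNReal.ofReal t)⁻¹ ^ 2 = (ENNReal.ofReal s)⁻¹ := by
  have hpow : EqOn (fun t => (ENNReal.ofReal t)⁻¹ ^ 2) (fun t => ENNReal.ofReal (t ^ (-2 : ℝ)))
      (Ioi s) := by
    intro t ht
    have ht0 : 0 < t := hs.trans ht
    dsimp only
    rw [← ENNReal.ofReal_inv_of_pos ht0, ← ENNReal.ofReal_pow (inv_nonneg.2 ht0.le),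
      Real.rpow_neg ht0.le, Real.rpow_two, inv_pow]
  have hnonneg : 0 ≤ᵐ[volume.restrict (Ioi s)] fun t : ℝ => t ^ (-2 : ℝ) :=
    (ae_restrict_iff' measurableSet_Ioi).2 <| .of_forall fun t ht =>
      Real.rpow_nonneg (hs.trans ht).le _
  rw [setLIntegral_congr_fun measurableSet_Ioi hpow,
    ← ofReal_integral_eq_lintegral_ofReal (integrableOn_Ioi_rpow_of_lt (by norm_num) hs) hnonneg,
    integral_Ioi_rpow_of_lt (by norm_num) hs, ← ENNReal.ofReal_inv_of_pos hs]
  norm_num [Real.rpow_neg_one]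

theorem setLAverage_Ioo_eq_inv_mul (f : ℝ → ℝ≥0∞) (a b : ℝ) :
    ⨍⁻ x in Ioo a b, f x ∂volume = (ENNReal.ofReal (b - a))⁻¹ * ∫⁻ x in Ioo a b, f x := by
  rw [setLAverage_eq, Real.volume_Ioo, div_eq_mul_inv, mul_comm]

/-- Weighted Hardy inequality with respect to the measure `dt/t` on `(0,∞)`. -/
theorem weighted_hardy_inequality (f : ℝ → ℝ≥0∞) (hf : Measurable f) (p : ℝ) (hp : 1 < p) :
    ∫⁻ t in Ioi (0:ℝ), ((ENNReal.ofReal t)⁻¹ * ∫⁻ s in Ioo (0:ℝ) t, f s) ^ p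
        * (ENNReal.ofReal t)⁻¹
      ≤ ∫⁻ t in Ioi (0:ℝ), (f t) ^ p * (ENNReal.ofReal t)⁻¹ := by
  have average_eq (g : ℝ → ℝ≥0∞) (t : ℝ) :
      (ENNReal.ofReal t)⁻¹ * ∫⁻ s in Ioo 0 t, g s = ⨍⁻ s in Ioo 0 t, g s ∂volume := by
    rw [setLAverage_Ioo_eq_inv_mul, sub_zero]
  calc ∫⁻ t in Ioi 0, ((ENNReal.ofReal t)⁻¹ * ∫⁻ s in Ioo 0 t, f s) ^ p * (ENNReal.ofReal t)⁻¹
      = ∫⁻ t in Ioi 0, (⨍⁻ s in Ioo 0 t, f s ∂volume) ^ p * (ENNReal.ofReal t)⁻¹ := by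
        simp_rw [average_eq]
    _ ≤ ∫⁻ t in Ioi 0, (⨍⁻ s in Ioo 0 t, f s ^ p ∂volume) * (ENNReal.ofReal t)⁻¹ :=
        lintegral_mono fun t => by
          gcongr
          exact ENNReal.rpow_laverage_le_laverage_rpow _ hp hf.aemeasurable
    _ = ∫⁻ t in Ioi 0, (∫⁻ s in Ioo 0 t, f s ^ p) * (ENNReal.ofReal t)⁻¹ ^ 2 := by
        refine lintegral_congr fun t => ?_
        rw [← average_eq]
        ring
    _ = ∫⁻ s in Ioi 0, f s ^ p * ∫⁻ t in Ioi s, (ENNReal.ofReal t)⁻¹ ^ 2 :=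
        setLIntegral_Ioi_lintegral_Ioo_mul_eq _ _ 0 (hf.pow_const p) (by fun_prop)
    _ = ∫⁻ s in Ioi 0, f s ^ p * (ENNReal.ofReal s)⁻¹ :=
        setLIntegral_congr_fun measurableSet_Ioi fun s hs => by rw [lintegral_Ioi_inv_sq hs]
end

section
/- Let $\eta\in(0,1/2)$, $\epsilon>0$, $Q\subset\mathbb{R}^n$ a cube, and let $F\subset Q$ be closed with $\delta(x)=\mathrm{dist}(x,F)$. Let $\Phi\in C^\infty(\mathbb{R})$ with $0\le\Phi\le1$, $\Phi(r)=1$ for $r\le1/16$, $\Phi(r)=0$ for $r>1/8$, and define $\Psi(x,t)=\Phi(\delta(x)/(\eta t))\,\Phi(t/(32 l(Q)))\,(1-\Phi(t/(16\epsilon)))$ on $\mathbb{R}^{n+1}_+$. Then for all $\alpha>0$ and $p>0$, $\int_{\mathbb{R}^n}\big(\int_0^\infty|\nabla\Psi(x,t)|^\alpha t^{\alpha-1}dt\big)^p dx\le C(\eta,\alpha,p,n)|Q|$. -/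
open MeasureTheory Set
open scoped ENNReal

open Filter
open scoped Topology

/-- The axis-parallel cube with center `c` and side length `l`. -/
def cube {n : ℕ} (c : EuclideanSpace ℝ (Fin n)) (l : ℝ) : Set (EuclideanSpace ℝ (Fin n)) :=
  {x | ∀ i, |x i - c i| ≤ l / 2}

lemma aux_mul3 {a b c a' b' c' La Lb Lc d : ℝ}
    (ha' : |a'| ≤ 1) (hb' : |b'| ≤ 1) (hb : |b| ≤ 1) (hc : |c| ≤ 1)
    (hA : |a' - a| ≤ La * d) (hB : |b' - b| ≤ Lb * d) (hC : |c' - c| ≤ Lc * d) :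
    |a' * b' * c' - a * b * c| ≤ (La + Lb + Lc) * d := by
  have key : a' * b' * c' - a * b * c
      = (a' * b') * (c' - c) + (a' * (b' - b)) * c + ((a' - a) * b) * c := by ring
  calc |a' * b' * c' - a * b * c|
      ≤ |(a' * b') * (c' - c)| + |(a' * (b' - b)) * c| + |((a' - a) * b) * c| := by
        rw [key]; exact (abs_add_le _ _).trans (by gcongr; exact abs_add_le _ _)
    _ ≤ |c' - c| + |b' - b| + |a' - a| := by
        rw [abs_mul, abs_mul, abs_mul, abs_mul, abs_mul, abs_mul]
        have h1 : (0:ℝ) ≤ |c' - c| := abs_nonneg _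
        have h2 : (0:ℝ) ≤ |b' - b| := abs_nonneg _
        have h3 : (0:ℝ) ≤ |a' - a| := abs_nonneg _
        have hab : |a'| * |b'| ≤ 1 := mul_le_one₀ ha' (abs_nonneg _) hb'
        have hbc : |b| * |c| ≤ 1 := mul_le_one₀ hb (abs_nonneg _) hc
        have g1 : |a'| * |b'| * |c' - c| ≤ |c' - c| := by
          calc |a'| * |b'| * |c' - c| ≤ 1 * |c' - c| :=
                mul_le_mul_of_nonneg_right hab h1
            _ = |c' - c| := one_mul _
        have g2 : |a'| * |b' - b| * |c| ≤ |b' - b| := by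
          have : |a'| * |b' - b| * |c| = |a'| * |c| * |b' - b| := by ring
          rw [this]
          calc |a'| * |c| * |b' - b| ≤ 1 * |b' - b| :=
                mul_le_mul_of_nonneg_right (mul_le_one₀ ha' (abs_nonneg _) hc) h2
            _ = |b' - b| := one_mul _
        have g3 : |a' - a| * |b| * |c| ≤ |a' - a| := by
          have : |a' - a| * |b| * |c| = |b| * |c| * |a' - a| := by ring
          rw [this]
          calc |b| * |c| * |a' - a| ≤ 1 * |a' - a| :=
                mul_le_mul_of_nonneg_right hbc h3
            _ = |a' - a| := one_mul _
        linarith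
    _ ≤ (La + Lb + Lc) * d := by linarith

lemma aux_rpow3 (a b c : ℝ≥0∞) {α : ℝ} (hα : 0 ≤ α) :
    (a + b + c) ^ α ≤ (3:ℝ≥0∞) ^ α * (a ^ α + b ^ α + c ^ α) := by
  have hm : a + b + c ≤ 3 * (a ⊔ b ⊔ c) := by
    have ha : a ≤ a ⊔ b ⊔ c := le_sup_of_le_left le_sup_left
    have hb : b ≤ a ⊔ b ⊔ c := le_sup_of_le_left le_sup_right
    have hc : c ≤ a ⊔ b ⊔ c := le_sup_right
    calc a + b + c ≤ (a ⊔ b ⊔ c) + (a ⊔ b ⊔ c) + (a ⊔ b ⊔ c) := by gcongr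
      _ = 3 * (a ⊔ b ⊔ c) := by ring
  calc (a + b + c) ^ α ≤ (3 * (a ⊔ b ⊔ c)) ^ α := ENNReal.rpow_le_rpow hm hα
    _ = 3 ^ α * (a ⊔ b ⊔ c) ^ α := ENNReal.mul_rpow_of_nonneg _ _ hα
    _ ≤ 3 ^ α * (a ^ α + b ^ α + c ^ α) := by
        gcongr
        have hcase : (a ⊔ b ⊔ c) = a ∨ (a ⊔ b ⊔ c) = b ∨ (a ⊔ b ⊔ c) = c := by
          rcases max_cases (a ⊔ b) c with ⟨h, _⟩ | ⟨h, _⟩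
          · rcases max_cases a b with ⟨h', _⟩ | ⟨h', _⟩
            · exact Or.inl (by rw [h, h'])
            · exact Or.inr (Or.inl (by rw [h, h']))
          · exact Or.inr (Or.inr h)
        rcases hcase with h | h | h <;> rw [h]
        · exact le_add_of_le_of_nonneg (le_add_of_le_of_nonneg le_rfl (zero_le)) (zero_le)
        · exact le_add_of_le_of_nonneg (le_add_of_nonneg_of_le (zero_le) le_rfl) (zero_le)
        · exact le_add_of_nonneg_of_le (zero_le) le_rfl


set_option maxHeartbeats 2000000 in
lemma key_bound {n : ℕ} {η l ε M : ℝ} (hη0 : 0 < η) (hη : η < 1/2) (hl : 0 < l) (hε : 0 < ε)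
    (hM1 : 1 ≤ M)
    {Φ : ℝ → ℝ} (hΦ01 : ∀ r, 0 ≤ Φ r ∧ Φ r ≤ 1)
    (hΦ1 : ∀ r ≤ (1:ℝ)/16, Φ r = 1) (hΦ0 : ∀ r > (1:ℝ)/8, Φ r = 0)
    (hΦ0' : ∀ r, (1:ℝ)/8 ≤ r → Φ r = 0)
    (hMlip : ∀ a b, |Φ a - Φ b| ≤ M * |a - b|)
    (F : Set (EuclideanSpace ℝ (Fin n)))
    (x : EuclideanSpace ℝ (Fin n)) (t : ℝ) (ht : 0 < t) :
    ENNReal.ofReal ‖fderiv ℝ (fun q : EuclideanSpace ℝ (Fin n) × ℝ =>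
        Φ (Metric.infDist q.1 F / (η * q.2)) * Φ (q.2 / (32 * l)) *
          (1 - Φ (q.2 / (16 * ε)))) (x, t)‖
      ≤ (if η*t/16 ≤ Metric.infDist x F ∧ Metric.infDist x F ≤ η*t/8 ∧ t ≤ 4*l
          then ENNReal.ofReal (3*M/(η*t)) else 0)
      + (if Metric.infDist x F ≤ η*t/8 ∧ 2*l ≤ t ∧ t ≤ 4*l
          then ENNReal.ofReal (M/(32*l)) else 0)
      + (if Metric.infDist x F ≤ η*t/8 ∧ ε ≤ t ∧ t ≤ 2*ε ∧ t ≤ 4*l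
          then ENNReal.ofReal (M/(16*ε)) else 0) := by
  set δ : EuclideanSpace ℝ (Fin n) → ℝ := fun z => Metric.infDist z F with hδdef
  have hM0 : (0:ℝ) < M := lt_of_lt_of_le one_pos hM1
  have hδ0 : ∀ z, 0 ≤ δ z := fun z => Metric.infDist_nonneg
  have hδlip : ∀ z w, |δ z - δ w| ≤ dist z w := by
    intro z w
    have := (Metric.lipschitz_infDist_pt F).dist_le_mul z w
    rwa [Real.dist_eq, NNReal.coe_one, one_mul] at this
  have hδcont : Continuous δ := Metric.continuous_infDist_pt F
  set Ψ : EuclideanSpace ℝ (Fin n) × ℝ → ℝ := fun q =>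
    Φ (δ q.1 / (η * q.2)) * Φ (q.2 / (32 * l)) * (1 - Φ (q.2 / (16 * ε))) with hΨdef
  show ENNReal.ofReal ‖fderiv ℝ Ψ (x, t)‖ ≤ _
  by_cases hA : η * t / 8 < δ x
  · -- Ψ vanishes near (x,t)
    have hopen : IsOpen {q : EuclideanSpace ℝ (Fin n) × ℝ | η * q.2 / 8 < δ q.1 ∧ 0 < q.2} := by
      apply IsOpen.inter
      · exact isOpen_lt (by fun_prop) (hδcont.comp continuous_fst)
      · exact isOpen_lt continuous_const continuous_snd
    have hev : Ψ =ᶠ[𝓝 (x, t)] fun _ => 0 := by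
      filter_upwards [hopen.mem_nhds ⟨hA, ht⟩] with q hq
      obtain ⟨hq1, hq2⟩ := hq
      have harg : (1:ℝ)/8 < δ q.1 / (η * q.2) := by
        rw [lt_div_iff₀ (by positivity)]; linarith
      simp only [Ψ, hΦ0 _ harg, zero_mul]
    rw [hev.fderiv_eq, fderiv_const_apply]
    simp
  · push_neg at hA
    by_cases hB : 4 * l < t
    · have hopen : IsOpen {q : EuclideanSpace ℝ (Fin n) × ℝ | 4 * l < q.2} :=
        isOpen_lt continuous_const continuous_snd
      have hev : Ψ =ᶠ[𝓝 (x, t)] fun _ => 0 := by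
        filter_upwards [hopen.mem_nhds hB] with q hq
        have harg : (1:ℝ)/8 < q.2 / (32 * l) := by
          rw [lt_div_iff₀ (by positivity)]; linarith
        simp only [Ψ, hΦ0 _ harg, mul_zero, zero_mul]
      rw [hev.fderiv_eq, fderiv_const_apply]
      simp
    · push_neg at hB
      set L₁ : ℝ := if η*t/16 ≤ δ x then 3*M/(η*t) else 0 with hL₁def
      set L₂ : ℝ := if 2*l ≤ t then M/(32*l) else 0 with hL₂def
      set L₃ : ℝ := if ε ≤ t ∧ t ≤ 2*ε then M/(16*ε) else 0 with hL₃def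
      have hL₁0 : 0 ≤ L₁ := by rw [hL₁def]; split <;> positivity
      have hL₂0 : 0 ≤ L₂ := by rw [hL₂def]; split <;> positivity
      have hL₃0 : 0 ≤ L₃ := by rw [hL₃def]; split <;> positivity
      -- factor 1
      obtain ⟨s₁, hs₁, hf₁⟩ : ∃ s ∈ 𝓝 ((x, t) : EuclideanSpace ℝ (Fin n) × ℝ), ∀ q ∈ s,
          |Φ (δ q.1 / (η * q.2)) - Φ (δ x / (η * t))| ≤ L₁ * dist q (x, t) := by
        by_cases hband : η*t/16 ≤ δ x
        · refine ⟨{q | t/2 < q.2}, ?_, ?_⟩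
          · exact (isOpen_lt continuous_const continuous_snd).mem_nhds (by simpa using by linarith)
          · intro q hq
            have hq2 : t/2 < q.2 := hq
            have hq2' : 0 < q.2 := by linarith
            have hrep : ∀ (z : EuclideanSpace ℝ (Fin n)) (s : ℝ), 0 < s →
                Φ (δ z / (η * s)) = Φ (min (δ z) (η * s / 8) / (η * s)) := by
              intro z s hs
              rcases le_or_gt (δ z) (η * s / 8) with h | h
              · rw [min_eq_left h]
              · rw [min_eq_right h.le]
                have e : η * s / 8 / (η * s) = 1/8 := by field_simp
                rw [e, hΦ0 _ (by rw [gt_iff_lt, lt_div_iff₀ (by positivity)]; linarith), hΦ0' _ le_rfl]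
            rw [hrep q.1 q.2 hq2', hrep x t ht]
            refine (hMlip _ _).trans ?_
            set u1 := min (δ q.1) (η * q.2 / 8) with hu1def
            set u2 := min (δ x) (η * t / 8) with hu2def
            set d := dist q (x, t) with hddef
            have hd0 : 0 ≤ d := dist_nonneg
            have hdts : |q.2 - t| ≤ d := by
              rw [hddef, Prod.dist_eq]
              exact le_trans (le_of_eq (Real.dist_eq q.2 t).symm) (le_max_right _ _)
            have hu12 : |u1 - u2| ≤ d := by
              have h1 : |δ q.1 - δ x| ≤ dist q.1 x := hδlip _ _
              have h2 : |η * q.2 / 8 - η * t / 8| ≤ |q.2 - t| := by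
                have : η * q.2 / 8 - η * t / 8 = (η/8) * (q.2 - t) := by ring
                rw [this, abs_mul, abs_of_pos (by positivity : (0:ℝ) < η/8)]
                nlinarith [abs_nonneg (q.2 - t)]
              calc |u1 - u2| ≤ max (|δ q.1 - δ x|) (|η * q.2 / 8 - η * t / 8|) :=
                    abs_min_sub_min_le_max _ _ _ _
                _ ≤ max (dist q.1 x) (dist q.2 t) := by
                    apply max_le_max h1 (h2.trans (le_of_eq (Real.dist_eq q.2 t).symm))
                _ = d := by rw [hddef, Prod.dist_eq]
            have hu2le : u2 ≤ η * t / 8 := min_le_right _ _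
            have hu2ge : 0 ≤ u2 := le_min (hδ0 x) (by positivity)
            have expand : u1 / (η * q.2) - u2 / (η * t)
                = (u1 - u2) / (η * q.2) + u2 * (t - q.2) / (η * q.2 * t) := by
              field_simp
              ring
            have b1 : |(u1 - u2) / (η * q.2)| ≤ d / (η * (t/2)) := by
              rw [abs_div, abs_of_pos (by positivity : (0:ℝ) < η * q.2)]
              apply div_le_div₀ hd0 hu12 (by positivity)
              nlinarith
            have b2 : |u2 * (t - q.2) / (η * q.2 * t)| ≤ (η * t / 8) * d / (η * (t/2) * t) := by
              rw [abs_div, abs_of_pos (by positivity : (0:ℝ) < η * q.2 * t), abs_mul]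
              apply div_le_div₀ (by positivity) ?_ (by positivity) ?_
              · apply mul_le_mul (by rwa [abs_of_nonneg hu2ge]) ?_ (abs_nonneg _) (by positivity)
                rw [abs_sub_comm]; exact hdts
              · nlinarith
            have total : |u1 / (η * q.2) - u2 / (η * t)| ≤ 3 / (η * t) * d := by
              rw [expand]
              refine (abs_add_le _ _).trans ?_
              have e2 : d / (η * (t/2)) + (η * t / 8) * d / (η * (t/2) * t)
                  = (2/(η*t) + 1/(4*t)) * d := by field_simp; ring
              have e3 : (2/(η*t) + 1/(4*t)) * d ≤ 3 / (η * t) * d := by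
                apply mul_le_mul_of_nonneg_right ?_ hd0
                have h4 : 1/(4*t) ≤ 1/(η*t) := by
                  apply one_div_le_one_div_of_le (by positivity)
                  nlinarith
                have : (3:ℝ)/(η*t) = 2/(η*t) + 1/(η*t) := by ring
                rw [this]; linarith
              linarith [b1, b2, le_of_eq e2]
            calc M * |u1 / (η * q.2) - u2 / (η * t)| ≤ M * (3 / (η * t) * d) := by
                  exact mul_le_mul_of_nonneg_left total (le_of_lt hM0)
              _ = (3*M/(η*t)) * d := by ring
              _ = L₁ * d := by rw [hL₁def, if_pos hband]
        · push_neg at hband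
          refine ⟨{q | δ q.1 < η * q.2 / 16}, ?_, ?_⟩
          · exact (isOpen_lt (hδcont.comp continuous_fst) (by fun_prop)).mem_nhds hband
          · intro q hq
            have hq1 : δ q.1 < η * q.2 / 16 := hq
            have hq2 : 0 < q.2 := by nlinarith [hδ0 q.1]
            have e1 : Φ (δ q.1 / (η * q.2)) = 1 :=
              hΦ1 _ (le_of_lt (by rw [div_lt_iff₀ (by positivity)]; linarith))
            have e2 : Φ (δ x / (η * t)) = 1 :=
              hΦ1 _ (le_of_lt (by rw [div_lt_iff₀ (by positivity)]; linarith))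
            rw [e1, e2, sub_self, abs_zero]
            positivity
      -- factor 2
      obtain ⟨s₂, hs₂, hf₂⟩ : ∃ s ∈ 𝓝 ((x, t) : EuclideanSpace ℝ (Fin n) × ℝ), ∀ q ∈ s,
          |Φ (q.2 / (32 * l)) - Φ (t / (32 * l))| ≤ L₂ * dist q (x, t) := by
        by_cases h2 : 2*l ≤ t
        · refine ⟨univ, univ_mem, fun q _ => ?_⟩
          refine (hMlip _ _).trans ?_
          have e : q.2 / (32*l) - t / (32*l) = (q.2 - t) / (32*l) := by ring
          rw [e, abs_div, abs_of_pos (by positivity : (0:ℝ) < 32*l)]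
          have hdts : |q.2 - t| ≤ dist q (x, t) := by
            rw [Prod.dist_eq]
            exact le_trans (le_of_eq (Real.dist_eq q.2 t).symm) (le_max_right _ _)
          rw [hL₂def, if_pos h2]
          calc M * (|q.2 - t| / (32*l)) = M / (32*l) * |q.2 - t| := by ring
            _ ≤ M / (32*l) * dist q (x, t) :=
                mul_le_mul_of_nonneg_left hdts (by positivity)
        · push_neg at h2
          refine ⟨{q | q.2 < 2*l}, (isOpen_lt continuous_snd continuous_const).mem_nhds h2, ?_⟩
          intro q hq
          have hq1 : q.2 < 2*l := hq
          have e1 : Φ (q.2 / (32*l)) = 1 := by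
            apply hΦ1
            rw [div_le_iff₀ (by positivity)]; linarith
          have e2 : Φ (t / (32*l)) = 1 := by
            apply hΦ1
            rw [div_le_iff₀ (by positivity)]; linarith
          rw [e1, e2, sub_self, abs_zero]
          positivity
      -- factor 3
      obtain ⟨s₃, hs₃, hf₃⟩ : ∃ s ∈ 𝓝 ((x, t) : EuclideanSpace ℝ (Fin n) × ℝ), ∀ q ∈ s,
          |(1 - Φ (q.2 / (16 * ε))) - (1 - Φ (t / (16 * ε)))| ≤ L₃ * dist q (x, t) := by
        by_cases h3 : ε ≤ t ∧ t ≤ 2*ε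
        · refine ⟨univ, univ_mem, fun q _ => ?_⟩
          have e : (1 - Φ (q.2 / (16 * ε))) - (1 - Φ (t / (16 * ε)))
              = -(Φ (q.2 / (16 * ε)) - Φ (t / (16 * ε))) := by ring
          rw [e, abs_neg]
          refine (hMlip _ _).trans ?_
          have e2 : q.2 / (16*ε) - t / (16*ε) = (q.2 - t) / (16*ε) := by ring
          rw [e2, abs_div, abs_of_pos (by positivity : (0:ℝ) < 16*ε)]
          have hdts : |q.2 - t| ≤ dist q (x, t) := by
            rw [Prod.dist_eq]
            exact le_trans (le_of_eq (Real.dist_eq q.2 t).symm) (le_max_right _ _)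
          rw [hL₃def, if_pos h3]
          calc M * (|q.2 - t| / (16*ε)) = M / (16*ε) * |q.2 - t| := by ring
            _ ≤ M / (16*ε) * dist q (x, t) :=
                mul_le_mul_of_nonneg_left hdts (by positivity)
        · rw [not_and_or, not_le, not_le] at h3
          have hL₃z : L₃ = 0 := by
            rw [hL₃def, if_neg]
            rw [not_and_or, not_le, not_le]
            exact h3
          rcases h3 with h3 | h3
          · refine ⟨{q | q.2 < ε}, (isOpen_lt continuous_snd continuous_const).mem_nhds h3, ?_⟩
            intro q hq
            have hq1 : q.2 < ε := hq
            have e1 : Φ (q.2 / (16*ε)) = 1 := by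
              apply hΦ1
              rw [div_le_iff₀ (by positivity)]; linarith
            have e2 : Φ (t / (16*ε)) = 1 := by
              apply hΦ1
              rw [div_le_iff₀ (by positivity)]; linarith
            rw [e1, e2, sub_self, abs_zero]
            positivity
          · refine ⟨{q | 2*ε < q.2}, (isOpen_lt continuous_const continuous_snd).mem_nhds h3, ?_⟩
            intro q hq
            have hq1 : 2*ε < q.2 := hq
            have e1 : Φ (q.2 / (16*ε)) = 0 := by
              apply hΦ0
              rw [gt_iff_lt, lt_div_iff₀ (by positivity)]; linarith
            have e2 : Φ (t / (16*ε)) = 0 := by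
              apply hΦ0
              rw [gt_iff_lt, lt_div_iff₀ (by positivity)]; linarith
            rw [e1, e2, sub_self, abs_zero]
            positivity
      -- combine
      have hlip : ∀ᶠ q in 𝓝 ((x, t) : EuclideanSpace ℝ (Fin n) × ℝ),
          ‖Ψ q - Ψ (x, t)‖ ≤ (L₁ + L₂ + L₃) * ‖q - (x, t)‖ := by
        filter_upwards [hs₁, hs₂, hs₃] with q h1 h2 h3
        rw [Real.norm_eq_abs, ← dist_eq_norm]
        have habs : ∀ r, |Φ r| ≤ 1 := fun r =>
          abs_le.mpr ⟨by linarith [(hΦ01 r).1], (hΦ01 r).2⟩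
        have habs1 : ∀ r, |1 - Φ r| ≤ 1 := fun r =>
          abs_le.mpr ⟨by linarith [(hΦ01 r).2], by linarith [(hΦ01 r).1]⟩
        exact aux_mul3 (habs _) (habs _) (habs _) (habs1 _) (hf₁ q h1) (hf₂ q h2) (hf₃ q h3)
      have hnorm : ‖fderiv ℝ Ψ (x, t)‖ ≤ L₁ + L₂ + L₃ :=
        norm_fderiv_le_of_lip' ℝ (by linarith) hlip
      calc ENNReal.ofReal ‖fderiv ℝ Ψ (x, t)‖ ≤ ENNReal.ofReal (L₁ + L₂ + L₃) :=
            ENNReal.ofReal_le_ofReal hnorm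
        _ = ENNReal.ofReal L₁ + ENNReal.ofReal L₂ + ENNReal.ofReal L₃ := by
            rw [ENNReal.ofReal_add (by linarith) hL₃0, ENNReal.ofReal_add hL₁0 hL₂0]
        _ ≤ _ := by
            gcongr
            · rw [hL₁def]
              split
              · rename_i hcond
                rw [if_pos ⟨hcond, hA, hB⟩]
              · simp
            · rw [hL₂def]
              split
              · rename_i hcond
                rw [if_pos ⟨hA, hcond, hB⟩]
              · simp
            · rw [hL₃def]
              split
              · rename_i hcond
                rw [if_pos ⟨hA, hcond.1, hcond.2, hB⟩]
              · simp


lemma phi_zero_of_ge {Φ : ℝ → ℝ} (hc : Continuous Φ) (hΦ0 : ∀ r > (1:ℝ)/8, Φ r = 0) :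
    ∀ r, (1:ℝ)/8 ≤ r → Φ r = 0 := by
  intro r hr
  rcases eq_or_lt_of_le hr with h | h
  · have h1 : Tendsto Φ (𝓝[>] ((1:ℝ)/8)) (𝓝 (Φ (1/8))) :=
      (hc.continuousAt).continuousWithinAt
    have h2 : Tendsto Φ (𝓝[>] ((1:ℝ)/8)) (𝓝 0) := by
      apply Tendsto.congr' _ tendsto_const_nhds
      filter_upwards [self_mem_nhdsWithin] with s hs
      exact (hΦ0 s hs).symm
    rw [← h]
    exact tendsto_nhds_unique h1 h2
  · exact hΦ0 r h

lemma phi_lipschitz {Φ : ℝ → ℝ} (hΦs : ContDiff ℝ (⊤ : ℕ∞) Φ)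
    (hΦ1 : ∀ r ≤ (1:ℝ)/16, Φ r = 1) (hΦ0 : ∀ r > (1:ℝ)/8, Φ r = 0) :
    ∃ M : ℝ, 1 ≤ M ∧ ∀ a b, |Φ a - Φ b| ≤ M * |a - b| := by
  have hd : Differentiable ℝ Φ := hΦs.differentiable (by simp)
  have hsupp : Function.support (deriv Φ) ⊆ Icc (1/16 : ℝ) (1/8) := by
    intro r hr
    by_contra hmem
    rw [mem_Icc, not_and_or, not_le, not_le] at hmem
    apply hr
    rcases hmem with h | h
    · have : Φ =ᶠ[𝓝 r] fun _ => 1 := by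
        filter_upwards [Iio_mem_nhds h] with s hs
        exact hΦ1 s (le_of_lt hs)
      rw [this.deriv_eq, deriv_const]
    · have : Φ =ᶠ[𝓝 r] fun _ => 0 := by
        filter_upwards [Ioi_mem_nhds h] with s hs
        exact hΦ0 s hs
      rw [this.deriv_eq, deriv_const]
  have hcs : HasCompactSupport (deriv Φ) :=
    HasCompactSupport.of_support_subset_isCompact isCompact_Icc hsupp
  have hdc : Continuous (deriv Φ) := hΦs.continuous_deriv (by simp)
  obtain ⟨B, hB⟩ := hcs.exists_bound_of_continuous hdc
  refine ⟨max B 1, le_max_right _ _, fun a b => ?_⟩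
  have hlip : LipschitzWith (Real.toNNReal (max B 1)) Φ := by
    apply lipschitzWith_of_nnnorm_deriv_le hd
    intro x
    rw [← NNReal.coe_le_coe, coe_nnnorm, Real.coe_toNNReal _ (by positivity)]
    exact (hB x).trans (le_max_left _ _)
  have := hlip.dist_le_mul a b
  rw [Real.dist_eq, Real.dist_eq, Real.coe_toNNReal _ (by positivity)] at this
  exact this



lemma coord_le_dist {n : ℕ} (x y : EuclideanSpace ℝ (Fin n)) (i : Fin n) :
    |x i - y i| ≤ dist x y := by
  rw [EuclideanSpace.dist_eq]
  simp only [Real.dist_eq]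
  have h1 : |x i - y i| ^ 2 ≤ ∑ j, |x j - y j| ^ 2 :=
    Finset.single_le_sum (f := fun j => |x j - y j| ^ 2)
      (fun j _ => sq_nonneg _) (Finset.mem_univ i)
  have h2 := Real.sqrt_le_sqrt h1
  rwa [Real.sqrt_sq_eq_abs, abs_abs] at h2

lemma isClosed_cube {n : ℕ} (c : EuclideanSpace ℝ (Fin n)) (L : ℝ) :
    IsClosed (cube c L) := by
  have : cube c L = ⋂ i, {x : EuclideanSpace ℝ (Fin n) | |x i - c i| ≤ L / 2} := by
    ext x; simp [cube, mem_iInter]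
  rw [this]
  refine isClosed_iInter fun i => ?_
  have hcont : Continuous fun x : EuclideanSpace ℝ (Fin n) => |x i - c i| :=
    ((EuclideanSpace.proj i).continuous.sub continuous_const).abs
  exact isClosed_le hcont continuous_const

lemma volume_cube {n : ℕ} (c : EuclideanSpace ℝ (Fin n)) {L : ℝ} (hL : 0 ≤ L) :
    volume (cube c L) = ENNReal.ofReal (L ^ n) := by
  have he : cube c L = (MeasurableEquiv.toLp 2 (Fin n → ℝ)).symm ⁻¹'
      (univ.pi fun i => Icc (c i - L / 2) (c i + L / 2)) := by
    ext x
    simp only [cube, mem_setOf_eq, mem_preimage, Set.mem_pi, mem_univ, forall_true_left, mem_Icc,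
      true_implies, MeasurableEquiv.coe_toLp_symm]
    constructor
    · intro h i
      have := abs_le.mp (h i)
      constructor <;> [linarith [(this).1]; linarith [(this).2]]
    · intro h i
      rw [abs_le]
      constructor <;> [linarith [(h i).1]; linarith [(h i).2]]
  rw [he, (EuclideanSpace.volume_preserving_symm_measurableEquiv_toLp (Fin n)).measure_preimage
    ((MeasurableSet.univ_pi fun i => measurableSet_Icc).nullMeasurableSet)]
  rw [volume_pi_pi]
  simp only [Real.volume_Icc]
  have : ∀ i : Fin n, ENNReal.ofReal (c i + L / 2 - (c i - L / 2)) = ENNReal.ofReal L := by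
    intro i; congr 1; ring
  rw [Finset.prod_congr rfl (fun i _ => this i), Finset.prod_const, Finset.card_univ,
    Fintype.card_fin, ← ENNReal.ofReal_pow hL]
set_option maxHeartbeats 2000000 in
/-- Integral estimate for the gradient of the adapted cut-off function `Ψ`. -/
theorem cutoff_gradient_estimate (n : ℕ) (η α p : ℝ)
    (hη0 : 0 < η) (hη : η < 1/2) (hα : 0 < α) (hp : 0 < p)
    (Φ : ℝ → ℝ) (hΦs : ContDiff ℝ (⊤ : ℕ∞) Φ) (hΦ01 : ∀ r, 0 ≤ Φ r ∧ Φ r ≤ 1)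
    (hΦ1 : ∀ r ≤ (1:ℝ)/16, Φ r = 1) (hΦ0 : ∀ r > (1:ℝ)/8, Φ r = 0) :
    ∃ C : ℝ, 0 < C ∧
      ∀ (c : EuclideanSpace ℝ (Fin n)) (l ε : ℝ), 0 < l → 0 < ε →
      ∀ F : Set (EuclideanSpace ℝ (Fin n)), IsClosed F → F.Nonempty → F ⊆ cube c l →
      ∀ Ψ : EuclideanSpace ℝ (Fin n) × ℝ → ℝ,
        (Ψ = fun q => Φ (Metric.infDist q.1 F / (η * q.2)) * Φ (q.2 / (32 * l)) *
              (1 - Φ (q.2 / (16 * ε)))) →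
        (∫⁻ x, (∫⁻ t in Ioi (0:ℝ),
              ENNReal.ofReal ‖fderiv ℝ Ψ (x, t)‖ ^ α * ENNReal.ofReal (t ^ (α - 1))) ^ p
          ∂volume)
          ≤ ENNReal.ofReal (C * l ^ n) := by
  obtain ⟨M, hM1, hMlip⟩ := phi_lipschitz hΦs hΦ1 hΦ0
  have hM0 : (0:ℝ) < M := lt_of_lt_of_le one_pos hM1
  have hΦ0' := phi_zero_of_ge hΦs.continuous hΦ0
  set a : ℝ := 3 ^ α * ((3*M/η)^α + 2*(M/8)^α) with hadef
  have ha : 0 < a := by positivity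
  refine ⟨a ^ p * 3 ^ n, by positivity, ?_⟩
  intro c l ε hl hε F hFcl hFne hFQ Ψ hΨ
  have key : ∀ (x : EuclideanSpace ℝ (Fin n)) (t : ℝ), 0 < t →
      ENNReal.ofReal ‖fderiv ℝ Ψ (x, t)‖
      ≤ (if η*t/16 ≤ Metric.infDist x F ∧ Metric.infDist x F ≤ η*t/8 ∧ t ≤ 4*l
          then ENNReal.ofReal (3*M/(η*t)) else 0)
      + (if Metric.infDist x F ≤ η*t/8 ∧ 2*l ≤ t ∧ t ≤ 4*l
          then ENNReal.ofReal (M/(32*l)) else 0)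
      + (if Metric.infDist x F ≤ η*t/8 ∧ ε ≤ t ∧ t ≤ 2*ε ∧ t ≤ 4*l
          then ENNReal.ofReal (M/(16*ε)) else 0) := by
    rw [hΨ]
    exact fun x t ht => key_bound hη0 hη hl hε hM1 hΦ01 hΦ1 hΦ0 hΦ0' hMlip F x t ht
  -- inner integral bound
  have inner_le : ∀ x : EuclideanSpace ℝ (Fin n),
      (∫⁻ t in Ioi (0:ℝ),
        ENNReal.ofReal ‖fderiv ℝ Ψ (x, t)‖ ^ α * ENNReal.ofReal (t ^ (α - 1)))
      ≤ ENNReal.ofReal a := by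
    intro x
    set dx : ℝ := Metric.infDist x F with hdxdef
    have hdx0 : 0 ≤ dx := Metric.infDist_nonneg
    set i1 : ℝ → ℝ≥0∞ := (Icc (8*dx/η) (16*dx/η)).indicator
      (fun _ => ENNReal.ofReal ((3*M/η)^α * (η/(8*dx)))) with hi1
    set i2 : ℝ → ℝ≥0∞ := (Icc (2*l) (4*l)).indicator
      (fun _ => ENNReal.ofReal ((M/8)^α / (2*l))) with hi2
    set i3 : ℝ → ℝ≥0∞ := (Icc ε (2*ε)).indicator
      (fun _ => ENNReal.ofReal ((M/8)^α / ε)) with hi3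
    have hptw : ∀ t ∈ Ioi (0:ℝ),
        ENNReal.ofReal ‖fderiv ℝ Ψ (x, t)‖ ^ α * ENNReal.ofReal (t ^ (α - 1))
        ≤ ENNReal.ofReal (3 ^ α) * (i1 t + i2 t + i3 t) := by
      intro t ht
      have ht' : 0 < t := ht
      refine le_trans (mul_le_mul_left (ENNReal.rpow_le_rpow (key x t ht') hα.le) _) ?_
      refine le_trans (mul_le_mul_left (aux_rpow3 _ _ _ hα.le) _) ?_
      have h3 : (3:ℝ≥0∞) ^ α = ENNReal.ofReal (3 ^ α) := by
        rw [← ENNReal.ofReal_rpow_of_pos (by norm_num : (0:ℝ) < 3)]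
        norm_num
      rw [mul_assoc, h3]
      apply mul_le_mul_right
      rw [add_mul, add_mul]
      have e3 : t ^ (α-1) = t ^ α / t := by rw [Real.rpow_sub ht', Real.rpow_one]
      refine add_le_add (add_le_add ?_ ?_) ?_
      · by_cases hc : η*t/16 ≤ dx ∧ dx ≤ η*t/8 ∧ t ≤ 4*l
        · rw [if_pos hc]
          have hδpos : 0 < dx := lt_of_lt_of_le (by positivity) hc.1
          have hmem : t ∈ Icc (8*dx/η) (16*dx/η) := by
            constructor
            · rw [div_le_iff₀ hη0]; linarith [hc.2.1]
            · rw [le_div_iff₀ hη0]; linarith [hc.1]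
          rw [hi1, Set.indicator_of_mem hmem]
          rw [ENNReal.ofReal_rpow_of_pos (by positivity), ← ENNReal.ofReal_mul (by positivity)]
          apply ENNReal.ofReal_le_ofReal
          have e1 : 3*M/(η*t) = (3*M/η)/t := by rw [div_div]
          rw [e1, Real.div_rpow (by positivity) ht'.le, e3]
          have htα : (0:ℝ) < t ^ α := Real.rpow_pos_of_pos ht' α
          have e4 : (3*M/η)^α / t^α * (t^α / t) = (3*M/η)^α * (1/t) := by
            field_simp
          rw [e4]
          apply mul_le_mul_of_nonneg_left ?_ (Real.rpow_nonneg (by positivity) α)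
          rw [div_le_div_iff₀ ht' (by positivity)]
          nlinarith [hc.2.1]
        · rw [if_neg hc, ENNReal.zero_rpow_of_pos hα, zero_mul]
          exact zero_le
      · by_cases hc : dx ≤ η*t/8 ∧ 2*l ≤ t ∧ t ≤ 4*l
        · rw [if_pos hc]
          rw [hi2, Set.indicator_of_mem (mem_Icc.mpr ⟨hc.2.1, hc.2.2⟩)]
          rw [ENNReal.ofReal_rpow_of_pos (by positivity), ← ENNReal.ofReal_mul (by positivity)]
          apply ENNReal.ofReal_le_ofReal
          rw [e3]
          calc (M/(32*l))^α * (t^α / t) ≤ (M/(32*l))^α * ((4*l)^α / (2*l)) := by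
                apply mul_le_mul_of_nonneg_left ?_ (Real.rpow_nonneg (by positivity) α)
                exact div_le_div₀ (by positivity)
                  (Real.rpow_le_rpow ht'.le hc.2.2 hα.le) (by positivity) hc.2.1
            _ = (M/8)^α / (2*l) := by
                rw [← mul_div_assoc, ← Real.mul_rpow (by positivity) (by positivity),
                  show M/(32*l)*(4*l) = M/8 by field_simp; ring]
        · rw [if_neg hc, ENNReal.zero_rpow_of_pos hα, zero_mul]
          exact zero_le
      · by_cases hc : dx ≤ η*t/8 ∧ ε ≤ t ∧ t ≤ 2*ε ∧ t ≤ 4*l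
        · rw [if_pos hc]
          rw [hi3, Set.indicator_of_mem (mem_Icc.mpr ⟨hc.2.1, hc.2.2.1⟩)]
          rw [ENNReal.ofReal_rpow_of_pos (by positivity), ← ENNReal.ofReal_mul (by positivity)]
          apply ENNReal.ofReal_le_ofReal
          rw [e3]
          calc (M/(16*ε))^α * (t^α / t) ≤ (M/(16*ε))^α * ((2*ε)^α / ε) := by
                apply mul_le_mul_of_nonneg_left ?_ (Real.rpow_nonneg (by positivity) α)
                exact div_le_div₀ (by positivity)
                  (Real.rpow_le_rpow ht'.le hc.2.2.1 hα.le) (by positivity) hc.2.1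
            _ = (M/8)^α / ε := by
                rw [← mul_div_assoc, ← Real.mul_rpow (by positivity) (by positivity),
                  show M/(16*ε)*(2*ε) = M/8 by field_simp; ring]
        · rw [if_neg hc, ENNReal.zero_rpow_of_pos hα, zero_mul]
          exact zero_le
    have m1 : Measurable i1 := measurable_const.indicator measurableSet_Icc
    have m2 : Measurable i2 := measurable_const.indicator measurableSet_Icc
    have m3 : Measurable i3 := measurable_const.indicator measurableSet_Icc
    have hint1 : (∫⁻ t, i1 t) ≤ ENNReal.ofReal ((3*M/η)^α) := by
      rw [hi1, lintegral_indicator measurableSet_Icc, setLIntegral_const, Real.volume_Icc,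
        ← ENNReal.ofReal_mul (by positivity)]
      apply ENNReal.ofReal_le_ofReal
      rcases eq_or_lt_of_le hdx0 with h0 | h0
      · rw [← h0]
        norm_num
        positivity
      · have e : (3*M/η)^α * (η/(8*dx)) * (16*dx/η - 8*dx/η) = (3*M/η)^α := by
          field_simp
          ring
        exact le_of_eq e
    have hint2 : (∫⁻ t, i2 t) ≤ ENNReal.ofReal ((M/8)^α) := by
      rw [hi2, lintegral_indicator measurableSet_Icc, setLIntegral_const, Real.volume_Icc,
        ← ENNReal.ofReal_mul (by positivity)]
      apply ENNReal.ofReal_le_ofReal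
      rw [show 4*l - 2*l = 2*l by ring]
      exact le_of_eq (div_mul_cancel₀ ((M/8)^α) (by positivity : (2*l) ≠ 0))
    have hint3 : (∫⁻ t, i3 t) ≤ ENNReal.ofReal ((M/8)^α) := by
      rw [hi3, lintegral_indicator measurableSet_Icc, setLIntegral_const, Real.volume_Icc,
        ← ENNReal.ofReal_mul (by positivity)]
      apply ENNReal.ofReal_le_ofReal
      rw [show 2*ε - ε = ε by ring]
      exact le_of_eq (div_mul_cancel₀ ((M/8)^α) (by positivity : ε ≠ 0))
    calc (∫⁻ t in Ioi (0:ℝ),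
          ENNReal.ofReal ‖fderiv ℝ Ψ (x, t)‖ ^ α * ENNReal.ofReal (t ^ (α - 1)))
        ≤ ∫⁻ t in Ioi (0:ℝ), ENNReal.ofReal (3 ^ α) * (i1 t + i2 t + i3 t) :=
          setLIntegral_mono' measurableSet_Ioi hptw
      _ ≤ ∫⁻ t, ENNReal.ofReal (3 ^ α) * (i1 t + i2 t + i3 t) :=
          setLIntegral_le_lintegral _ _
      _ = ENNReal.ofReal (3 ^ α) * ∫⁻ t, (i1 t + i2 t + i3 t) :=
          lintegral_const_mul' _ _ ENNReal.ofReal_ne_top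
      _ ≤ ENNReal.ofReal (3 ^ α) *
          (ENNReal.ofReal ((3*M/η)^α) + ENNReal.ofReal ((M/8)^α) + ENNReal.ofReal ((M/8)^α)) := by
          apply mul_le_mul_right
          rw [lintegral_add_left (f := fun t => i1 t + i2 t) (m1.add m2), lintegral_add_left m1]
          exact add_le_add (add_le_add hint1 hint2) hint3
      _ = ENNReal.ofReal a := by
          rw [← ENNReal.ofReal_add (by positivity) (by positivity),
            ← ENNReal.ofReal_add (by positivity) (by positivity),
            ← ENNReal.ofReal_mul (by positivity)]
          congr 1
          rw [hadef]
          ring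
  -- inner integral vanishes far from the cube
  have inner_zero : ∀ x : EuclideanSpace ℝ (Fin n), l/4 < Metric.infDist x F →
      (∫⁻ t in Ioi (0:ℝ),
        ENNReal.ofReal ‖fderiv ℝ Ψ (x, t)‖ ^ α * ENNReal.ofReal (t ^ (α - 1))) = 0 := by
    intro x hx
    apply le_antisymm ?_ (zero_le)
    have hptw : ∀ t ∈ Ioi (0:ℝ),
        ENNReal.ofReal ‖fderiv ℝ Ψ (x, t)‖ ^ α * ENNReal.ofReal (t ^ (α - 1)) ≤ 0 := by
      intro t ht
      have ht' : 0 < t := ht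
      have hk := key x t ht'
      have hfar : ¬(Metric.infDist x F ≤ η*t/8 ∧ t ≤ 4*l) := by
        rintro ⟨h1, h2⟩
        nlinarith
      rw [if_neg (by tauto), if_neg (by tauto), if_neg (by tauto)] at hk
      simp only [add_zero] at hk
      have hz : ENNReal.ofReal ‖fderiv ℝ Ψ (x, t)‖ = 0 := le_antisymm hk (zero_le)
      rw [hz, ENNReal.zero_rpow_of_pos hα, zero_mul]
    calc (∫⁻ t in Ioi (0:ℝ),
          ENNReal.ofReal ‖fderiv ℝ Ψ (x, t)‖ ^ α * ENNReal.ofReal (t ^ (α - 1)))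
        ≤ ∫⁻ _ in Ioi (0:ℝ), 0 := setLIntegral_mono' measurableSet_Ioi hptw
      _ = 0 := lintegral_zero
  -- membership in the enlarged cube
  have hmem : ∀ x : EuclideanSpace ℝ (Fin n), Metric.infDist x F ≤ l/4 →
      x ∈ cube c (3*l) := by
    intro x hx
    have hlt : Metric.infDist x F < l/2 := lt_of_le_of_lt hx (by linarith)
    obtain ⟨y, hyF, hxy⟩ := (Metric.infDist_lt_iff hFne).mp hlt
    intro i
    have h1 : |x i - y i| ≤ dist x y := coord_le_dist x y i
    have h2 : |y i - c i| ≤ l/2 := hFQ hyF i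
    calc |x i - c i| ≤ |x i - y i| + |y i - c i| := abs_sub_le _ _ _
      _ ≤ l/2 + l/2 := add_le_add (le_of_lt (lt_of_le_of_lt h1 hxy)) h2
      _ ≤ 3*l/2 := by linarith
  -- assemble
  calc (∫⁻ x, (∫⁻ t in Ioi (0:ℝ),
          ENNReal.ofReal ‖fderiv ℝ Ψ (x, t)‖ ^ α * ENNReal.ofReal (t ^ (α - 1))) ^ p ∂volume)
      ≤ ∫⁻ x, (cube c (3*l)).indicator (fun _ => ENNReal.ofReal a ^ p) x ∂volume := by
        apply lintegral_mono
        intro x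
        dsimp only
        by_cases hx : Metric.infDist x F ≤ l/4
        · rw [Set.indicator_of_mem (hmem x hx)]
          exact ENNReal.rpow_le_rpow (inner_le x) hp.le
        · rw [inner_zero x (not_le.mp hx), ENNReal.zero_rpow_of_pos hp]
          exact zero_le
    _ = ENNReal.ofReal a ^ p * volume (cube c (3*l)) := by
        rw [lintegral_indicator (isClosed_cube c (3*l)).measurableSet, setLIntegral_const]
    _ = ENNReal.ofReal (a ^ p * 3 ^ n * l ^ n) := by
        rw [volume_cube c (by positivity : (0:ℝ) ≤ 3*l),
          ENNReal.ofReal_rpow_of_pos ha, ← ENNReal.ofReal_mul (by positivity)]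
        congr 1
        rw [mul_pow]
        ring
    _ ≤ ENNReal.ofReal (a ^ p * 3 ^ n * l ^ n) := le_rfl
end

section
/- Let $K_t(x,y)$ be a measurable kernel on $\mathbb{R}^n\times\mathbb{R}^n$ satisfying the Gaussian bound $|K_t(y,z)|\le C t^{-n}e^{-|y-z|^2/(c t^2)}$, and let $\varphi$ be Lipschitz (with $\nabla\varphi$ locally integrable). Then for any $x_0\in\mathbb{R}^n$, $r>0$, and any $y$ with $|y-x_0|\le r$, $\big|\int_{\mathbb{R}^n}K_r(y,z)\big(\varphi(z)-(\varphi)_{B(x_0,2r)}\big)dz\big|\le C' r\, M(\nabla\varphi)(x_0)$, where $(\varphi)_{B}$ is the average of $\varphi$ over $B$ and $M$ is the Hardy–Littlewood maximal operator. -/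
/-!
Bound the kernel by `C r⁻ⁿ exp (-|y - z|² / (c r²))` and cover `ℝⁿ` by the balls
`B(x₀, 2ᵏ · 2r)`. Since `|y - x₀| ≤ r`, the Gaussian factor is at most `exp (-(2ᵏ⁺¹ - 1)² / c)`
outside `B(x₀, 2ᵏ · 2r)`. On a ball `B = B(x₀, R)` with `R ≥ 2r`, the oscillation
`∫_B |φ - (φ)_{B(x₀,2r)}|` is at most `2R |B| M(∇φ)(x₀)`: write `φ z - φ x₀` as the integral of
`∇φ` along the segment `[x₀, z]` and exchange the integrals; after the homothety of ratio `s`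
about `x₀`, the slice at parameter `s` is an integral of `|∇φ|` over `B(x₀, sR)`, hence at most
`|B| M(∇φ)(x₀)`. The superexponential decay of the Gaussian factor beats the growth
`2^{k(n+1)}` of `R |B|`, so the resulting series converges.
-/

open MeasureTheory Metric
open scoped ENNReal NNReal

/-- The (centered) Hardy–Littlewood maximal function of `g`. -/
noncomputable def HLMaximal {n : ℕ} (g : EuclideanSpace ℝ (Fin n) → ℝ)
    (x : EuclideanSpace ℝ (Fin n)) : ℝ≥0∞ :=
  ⨆ (r : ℝ) (_ : 0 < r),
    (volume (ball x r))⁻¹ * ∫⁻ y in ball x r, ENNReal.ofReal |g y| ∂volume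

open Set Real

theorem ofReal_abs_integral_mul_le_lintegral {α : Type*} [MeasurableSpace α] {μ : Measure α}
    {k f G : α → ℝ} (hk : ∀ x, |k x| ≤ G x) :
    ENNReal.ofReal |∫ x, k x * f x ∂μ| ≤ ∫⁻ x, ENNReal.ofReal (G x) * ENNReal.ofReal |f x| ∂μ := by
  rw [← Real.enorm_eq_ofReal_abs]
  refine (enorm_integral_le_lintegral_enorm _).trans (lintegral_mono fun x => ?_)
  rw [Real.enorm_eq_ofReal_abs, abs_mul, ← ENNReal.ofReal_mul ((abs_nonneg _).trans (hk x))]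
  exact ENNReal.ofReal_le_ofReal (mul_le_mul_of_nonneg_right (hk x) (abs_nonneg _))

theorem ofReal_abs_sub_setAverage_le {α : Type*} [MeasurableSpace α] {μ : Measure α} {s : Set α}
    (hs₀ : μ s ≠ 0) (hs : μ s ≠ ∞) {f : α → ℝ} (hf : IntegrableOn f s μ) (a : ℝ) :
    ENNReal.ofReal |a - ⨍ x in s, f x ∂μ| ≤ (μ s)⁻¹ * ∫⁻ x in s, ENNReal.ofReal |f x - a| ∂μ := by
  have : IsFiniteMeasure (μ.restrict s) := isFiniteMeasure_restrict.2 hs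
  have hf' : Integrable f ((μ.restrict s univ)⁻¹ • μ.restrict s) :=
    hf.smul_measure (ENNReal.inv_ne_top.2 (by rwa [Measure.restrict_apply_univ]))
  have hsub : a - ⨍ x in s, f x ∂μ = ⨍ x in s, (a - f x) ∂μ := by
    conv_lhs => rw [← setAverage_const hs₀ hs a]
    simp only [average_eq', integral_sub (integrable_const a) hf']
  rw [hsub, ← Real.enorm_eq_ofReal_abs, average_eq', Measure.restrict_apply_univ]
  refine (enorm_integral_le_lintegral_enorm _).trans_eq ?_
  rw [lintegral_smul_measure, smul_eq_mul]
  simp only [Real.enorm_eq_ofReal_abs, abs_sub_comm]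

theorem lintegral_mul_le_tsum_mul_setLIntegral_ball_two_pow {X : Type*} [PseudoMetricSpace X]
    [MeasurableSpace X] [OpensMeasurableSpace X] (μ : Measure X) (x₀ : X) {ρ : ℝ} (hρ : 0 < ρ)
    {F H : X → ℝ≥0∞} (hH : Measurable H) {b : ℕ → ℝ≥0∞} (hF₀ : ∀ z, F z ≤ b 0)
    (hF : ∀ k z, z ∉ ball x₀ (2 ^ k * ρ) → F z ≤ b (k + 1)) :
    ∫⁻ z, F z * H z ∂μ ≤ ∑' k, b k * ∫⁻ z in ball x₀ (2 ^ k * ρ), H z ∂μ := by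
  have hshell : ∀ z, ∃ k, z ∈ ball x₀ (2 ^ k * ρ) ∧ F z ≤ b k := by
    intro z
    classical
    have hex : ∃ k : ℕ, z ∈ ball x₀ (2 ^ k * ρ) := by
      obtain ⟨k, hk⟩ := pow_unbounded_of_one_lt (dist z x₀ / ρ) one_lt_two
      exact ⟨k, mem_ball.2 ((div_lt_iff₀ hρ).1 hk)⟩
    refine ⟨Nat.find hex, Nat.find_spec hex, ?_⟩
    rcases h : Nat.find hex with _ | m
    · exact hF₀ z
    · exact hF m z (Nat.find_min hex (h ▸ m.lt_succ_self))
  calc ∫⁻ z, F z * H z ∂μ ≤ ∫⁻ z, ∑' k, b k * (ball x₀ (2 ^ k * ρ)).indicator H z ∂μ := by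
        refine lintegral_mono fun z => ?_
        obtain ⟨k, hzk, hFk⟩ := hshell z
        refine le_trans ?_ (ENNReal.le_tsum k)
        rw [indicator_of_mem hzk]
        gcongr
    _ = ∑' k, b k * ∫⁻ z in ball x₀ (2 ^ k * ρ), H z ∂μ := by
        rw [lintegral_tsum fun k => ((hH.indicator measurableSet_ball).const_mul _).aemeasurable]
        simp_rw [lintegral_const_mul _ (hH.indicator measurableSet_ball),
          lintegral_indicator measurableSet_ball]

section Homothety

variable {E : Type*} [NormedAddCommGroup E] [NormedSpace ℝ E] [MeasurableSpace E] [BorelSpace E]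
  [FiniteDimensional ℝ E] (μ : Measure E) [μ.IsAddHaarMeasure]

theorem lintegral_comp_homothety {f : E → ℝ≥0∞} (hf : Measurable f) (x₀ : E) {s : ℝ}
    (hs : 0 < s) :
    ∫⁻ z, f (x₀ + s • (z - x₀)) ∂μ
      = ENNReal.ofReal ((s ^ Module.finrank ℝ E)⁻¹) * ∫⁻ z, f z ∂μ := by
  calc ∫⁻ z, f (x₀ + s • (z - x₀)) ∂μ = ∫⁻ v, f (x₀ + s • v) ∂μ := by
        simpa [sub_eq_add_neg] using
          lintegral_add_right_eq_self (μ := μ) (fun v => f (x₀ + s • v)) (-x₀)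
    _ = ∫⁻ u, f (x₀ + u) ∂(Measure.map (s • ·) μ) :=
        (lintegral_map (hf.comp (measurable_const_add x₀)) (measurable_const_smul s)).symm
    _ = ENNReal.ofReal ((s ^ Module.finrank ℝ E)⁻¹) * ∫⁻ z, f z ∂μ := by
        rw [Measure.map_addHaar_smul μ hs.ne', lintegral_smul_measure,
          lintegral_add_left_eq_self f x₀, abs_of_pos (by positivity), smul_eq_mul]

theorem setLIntegral_ball_comp_homothety {f : E → ℝ≥0∞} (hf : Measurable f) (x₀ : E) {s : ℝ}
    (hs : 0 < s) (R : ℝ) :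
    ∫⁻ z in ball x₀ R, f (x₀ + s • (z - x₀)) ∂μ
      = ENNReal.ofReal ((s ^ Module.finrank ℝ E)⁻¹) * ∫⁻ u in ball x₀ (s * R), f u ∂μ := by
  have hpre : ∀ z : E, x₀ + s • (z - x₀) ∈ ball x₀ (s * R) ↔ z ∈ ball x₀ R := fun z => by
    simp only [mem_ball, dist_eq_norm, add_sub_cancel_left, norm_smul, Real.norm_eq_abs,
      abs_of_pos hs, mul_lt_mul_iff_right₀ hs]
  rw [← lintegral_indicator measurableSet_ball, ← lintegral_indicator measurableSet_ball,
    ← lintegral_comp_homothety μ (hf.indicator measurableSet_ball) x₀ hs]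
  congr 1 with z
  by_cases hz : z ∈ ball x₀ R
  · rw [indicator_of_mem hz, indicator_of_mem ((hpre z).2 hz)]
  · rw [indicator_of_notMem hz, indicator_of_notMem (mt (hpre z).1 hz)]

end Homothety

open scoped Nat in
theorem exp_neg_le_factorial_div_pow {t : ℝ} (ht : 0 < t) (m : ℕ) : exp (-t) ≤ m ! / t ^ m := by
  rw [exp_neg, ← inv_div]
  exact inv_anti₀ (by positivity) (pow_div_factorial_le_exp t ht.le m)

open scoped Nat in
theorem summable_exp_neg_two_pow_sub_one_sq_div_mul_pow {c : ℝ} (hc : 0 < c) (q : ℝ) :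
    Summable fun k : ℕ => exp (-(2 ^ k - 1) ^ 2 / c) * q ^ k := by
  -- `exp (-t) ≤ m ! / t ^ m` with `4 ^ m > 2 |q|` dominates the tail by a geometric series.
  obtain ⟨m, hm⟩ : ∃ m : ℕ, 2 * |q| < 4 ^ m := pow_unbounded_of_one_lt _ (by norm_num)
  have hratio : |q| / 4 ^ m ≤ 1 / 2 := by
    rw [div_le_div_iff₀ (by positivity) two_pos]
    linarith
  rw [← summable_nat_add_iff 1]
  refine Summable.of_norm_bounded (summable_geometric_two.mul_left (m ! * c ^ m * |q|))
    fun k => ?_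
  have hsq : (4 : ℝ) ^ k ≤ (2 ^ (k + 1) - 1) ^ 2 := by
    have : (1 : ℝ) ≤ 2 ^ k := one_le_pow₀ one_le_two
    rw [show (4 : ℝ) ^ k = (2 ^ k) ^ 2 by rw [← pow_mul, mul_comm, pow_mul]; norm_num]
    gcongr
    rw [pow_succ]
    linarith
  have hexp : exp (-(2 ^ (k + 1) - 1) ^ 2 / c) ≤ m ! / (4 ^ k / c) ^ m :=
    (exp_le_exp.2 (by rw [neg_div]; gcongr)).trans
      (exp_neg_le_factorial_div_pow (by positivity) m)
  rw [norm_mul, norm_of_nonneg (exp_nonneg _), norm_pow, norm_eq_abs]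
  calc exp (-(2 ^ (k + 1) - 1) ^ 2 / c) * |q| ^ (k + 1)
      ≤ m ! / (4 ^ k / c) ^ m * |q| ^ (k + 1) := by gcongr
    _ = m ! * c ^ m * |q| * (|q| / 4 ^ m) ^ k := by
        rw [div_pow, div_pow, ← pow_mul, ← pow_mul, mul_comm k m, pow_succ]
        field_simp
    _ ≤ m ! * c ^ m * |q| * (1 / 2) ^ k := by gcongr

theorem exp_neg_sq_div_le {c r a d : ℝ} (hc : 0 < c) (hr : 0 < r) (ha : 0 ≤ a) (had : a * r ≤ d) :
    exp (-d ^ 2 / (c * r ^ 2)) ≤ exp (-a ^ 2 / c) := by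
  rw [exp_le_exp, neg_div, neg_div, neg_le_neg_iff, div_le_div_iff₀ hc (by positivity)]
  have : (a * r) ^ 2 ≤ d ^ 2 := pow_le_pow_left₀ (by positivity) had 2
  nlinarith

theorem ofReal_abs_sub_le_mul_lintegral_norm_fderiv {F : Type*} [NormedAddCommGroup F]
    [NormedSpace ℝ F] {φ : F → ℝ} (hφ : ContDiff ℝ 1 φ) (a b : F) :
    ENNReal.ofReal |φ b - φ a|
      ≤ ENNReal.ofReal ‖b - a‖
          * ∫⁻ s in Ioc (0 : ℝ) 1, ENNReal.ofReal ‖fderiv ℝ φ (a + s • (b - a))‖ := by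
  have hpath : ∀ s : ℝ, HasDerivAt (fun t : ℝ => a + t • (b - a)) (b - a) s := fun s => by
    simpa using ((hasDerivAt_id s).smul_const (b - a)).const_add a
  have hderiv : ∀ s : ℝ, HasDerivAt (fun t : ℝ => φ (a + t • (b - a)))
      (fderiv ℝ φ (a + s • (b - a)) (b - a)) s := fun s =>
    (hφ.differentiable one_ne_zero _).hasFDerivAt.comp_hasDerivAt s (hpath s)
  have hcont : Continuous fun s : ℝ => fderiv ℝ φ (a + s • (b - a)) (b - a) :=
    ((hφ.continuous_fderiv one_ne_zero).comp (by fun_prop)).clm_apply continuous_const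
  have hFTC : φ b - φ a = ∫ s in Ioc (0 : ℝ) 1, fderiv ℝ φ (a + s • (b - a)) (b - a) := by
    rw [← intervalIntegral.integral_of_le zero_le_one,
      intervalIntegral.integral_eq_sub_of_hasDerivAt (fun s _ => hderiv s)
        (hcont.intervalIntegrable 0 1)]
    simp
  rw [hFTC, ← Real.enorm_eq_ofReal_abs, ← lintegral_const_mul' _ _ ENNReal.ofReal_ne_top]
  refine (enorm_integral_le_lintegral_enorm _).trans (lintegral_mono fun s => ?_)
  rw [Real.enorm_eq_ofReal_abs, ← ENNReal.ofReal_mul (norm_nonneg _), mul_comm]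
  exact ENNReal.ofReal_le_ofReal
    ((ContinuousLinearMap.le_opNorm _ _).trans_eq' (Real.norm_eq_abs _).symm)

section Euclidean

variable {n : ℕ}

local notation "E" => EuclideanSpace ℝ (Fin n)

theorem setLIntegral_ball_le_volume_mul_HLMaximal (g : E → ℝ) (x₀ : E) {ρ : ℝ} (hρ : 0 < ρ) :
    ∫⁻ u in ball x₀ ρ, ENNReal.ofReal |g u| ≤ volume (ball x₀ ρ) * HLMaximal g x₀ := by
  rw [← ENNReal.inv_mul_le_iff (measure_ball_pos volume x₀ hρ).ne' measure_ball_lt_top.ne]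
  exact le_iSup₂ (f := fun (r : ℝ) (_ : 0 < r) =>
    (volume (ball x₀ r))⁻¹ * ∫⁻ u in ball x₀ r, ENNReal.ofReal |g u|) ρ hρ

theorem setLIntegral_ball_comp_homothety_le_HLMaximal {g : E → ℝ} (hg : Measurable g) (x₀ : E)
    {s R : ℝ} (hs : 0 < s) (hR : 0 < R) :
    ∫⁻ z in ball x₀ R, ENNReal.ofReal |g (x₀ + s • (z - x₀))|
      ≤ volume (ball x₀ R) * HLMaximal g x₀ := by
  rw [setLIntegral_ball_comp_homothety volume hg.abs.ennreal_ofReal x₀ hs]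
  calc ENNReal.ofReal ((s ^ Module.finrank ℝ E)⁻¹) * ∫⁻ u in ball x₀ (s * R), ENNReal.ofReal |g u|
      ≤ ENNReal.ofReal ((s ^ Module.finrank ℝ E)⁻¹) * (volume (ball x₀ (s * R)) * HLMaximal g x₀) :=
        mul_le_mul_right (setLIntegral_ball_le_volume_mul_HLMaximal g x₀ (mul_pos hs hR)) _
    _ = volume (ball x₀ R) * HLMaximal g x₀ := by
        rw [Measure.addHaar_ball_of_pos _ _ (mul_pos hs hR), Measure.addHaar_ball_of_pos _ _ hR,
          ← mul_assoc, ← mul_assoc, ← ENNReal.ofReal_mul (by positivity), mul_pow,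
          ← mul_assoc, inv_mul_cancel₀ (by positivity), one_mul]

theorem setLIntegral_ball_abs_sub_center_le {φ : E → ℝ} (hφ : ContDiff ℝ 1 φ) (x₀ : E) {R : ℝ}
    (hR : 0 < R) :
    ∫⁻ z in ball x₀ R, ENNReal.ofReal |φ z - φ x₀|
      ≤ ENNReal.ofReal R * volume (ball x₀ R) * HLMaximal (fun z => ‖fderiv ℝ φ z‖) x₀ := by
  have hDφ : Continuous fun z => ‖fderiv ℝ φ z‖ := (hφ.continuous_fderiv one_ne_zero).norm
  calc ∫⁻ z in ball x₀ R, ENNReal.ofReal |φ z - φ x₀|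
      ≤ ∫⁻ z in ball x₀ R, ENNReal.ofReal R
          * ∫⁻ s in Ioc (0 : ℝ) 1, ENNReal.ofReal ‖fderiv ℝ φ (x₀ + s • (z - x₀))‖ := by
        refine setLIntegral_mono' measurableSet_ball fun z hz => ?_
        refine (ofReal_abs_sub_le_mul_lintegral_norm_fderiv hφ x₀ z).trans ?_
        gcongr
        exact (mem_ball_iff_norm.1 hz).le
    _ = ENNReal.ofReal R * ∫⁻ s in Ioc (0 : ℝ) 1,
          ∫⁻ z in ball x₀ R, ENNReal.ofReal ‖fderiv ℝ φ (x₀ + s • (z - x₀))‖ := by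
        rw [lintegral_const_mul' _ _ ENNReal.ofReal_ne_top, lintegral_lintegral_swap]
        exact ((hDφ.comp (by fun_prop : Continuous fun p : E × ℝ => x₀ + p.2 • (p.1 - x₀))
          ).measurable.ennreal_ofReal).aemeasurable
    _ ≤ ENNReal.ofReal R * ∫⁻ _ in Ioc (0 : ℝ) 1,
          volume (ball x₀ R) * HLMaximal (fun z => ‖fderiv ℝ φ z‖) x₀ := by
        refine mul_le_mul_right (setLIntegral_mono' measurableSet_Ioc fun s hs => ?_) _
        simpa only [abs_norm] using
          setLIntegral_ball_comp_homothety_le_HLMaximal hDφ.measurable x₀ hs.1 hR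
    _ = ENNReal.ofReal R * volume (ball x₀ R) * HLMaximal (fun z => ‖fderiv ℝ φ z‖) x₀ := by
        rw [setLIntegral_const, Real.volume_Ioc, sub_zero, ENNReal.ofReal_one, mul_one, mul_assoc]

theorem ofReal_abs_center_sub_setAverage_ball_le {φ : E → ℝ} (hφ : ContDiff ℝ 1 φ) (x₀ : E) {ρ : ℝ}
    (hρ : 0 < ρ) :
    ENNReal.ofReal |φ x₀ - ⨍ w in ball x₀ ρ, φ w|
      ≤ ENNReal.ofReal ρ * HLMaximal (fun z => ‖fderiv ℝ φ z‖) x₀ := by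
  have h₀ : volume (ball x₀ ρ) ≠ 0 := (measure_ball_pos volume x₀ hρ).ne'
  have hfin : volume (ball x₀ ρ) ≠ ∞ := measure_ball_lt_top.ne
  refine (ofReal_abs_sub_setAverage_le h₀ hfin
    (hφ.continuous.locallyIntegrable.integrableOn_isCompact (isCompact_closedBall x₀ ρ)
      |>.mono_set ball_subset_closedBall) _).trans ?_
  rw [ENNReal.inv_mul_le_iff h₀ hfin, mul_left_comm, ← mul_assoc]
  exact setLIntegral_ball_abs_sub_center_le hφ x₀ hρ

theorem setLIntegral_ball_abs_sub_setAverage_le {φ : E → ℝ} (hφ : ContDiff ℝ 1 φ) (x₀ : E)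
    {ρ R : ℝ} (hρ : 0 < ρ) (hρR : ρ ≤ R) :
    ∫⁻ z in ball x₀ R, ENNReal.ofReal |φ z - ⨍ w in ball x₀ ρ, φ w|
      ≤ ENNReal.ofReal R * volume (ball x₀ R) * (2 * HLMaximal (fun z => ‖fderiv ℝ φ z‖) x₀) := by
  set m := ⨍ w in ball x₀ ρ, φ w
  set M := HLMaximal (fun z => ‖fderiv ℝ φ z‖) x₀
  calc ∫⁻ z in ball x₀ R, ENNReal.ofReal |φ z - m|
      ≤ ∫⁻ z in ball x₀ R, (ENNReal.ofReal |φ z - φ x₀| + ENNReal.ofReal |φ x₀ - m|) :=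
        lintegral_mono fun z => by
          rw [← ENNReal.ofReal_add (abs_nonneg _) (abs_nonneg _)]
          exact ENNReal.ofReal_le_ofReal (abs_sub_le _ _ _)
    _ = (∫⁻ z in ball x₀ R, ENNReal.ofReal |φ z - φ x₀|)
          + volume (ball x₀ R) * ENNReal.ofReal |φ x₀ - m| := by
        rw [lintegral_add_right _ measurable_const, setLIntegral_const, mul_comm]
    _ ≤ ENNReal.ofReal R * volume (ball x₀ R) * M
          + volume (ball x₀ R) * (ENNReal.ofReal R * M) := by
        gcongr
        · exact setLIntegral_ball_abs_sub_center_le hφ x₀ (hρ.trans_le hρR)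
        · exact (ofReal_abs_center_sub_setAverage_ball_le hφ x₀ hρ).trans (by gcongr)
    _ = ENNReal.ofReal R * volume (ball x₀ R) * (2 * M) := by ring

theorem lintegral_exp_neg_dist_sq_mul_le {c r : ℝ} (hc : 0 < c) (hr : 0 < r) {x₀ y : E}
    (hy : dist y x₀ ≤ r) {H : E → ℝ≥0∞} (hH : Measurable H) {A : ℝ≥0∞}
    (hHball : ∀ R, 2 * r ≤ R → ∫⁻ z in ball x₀ R, H z ≤ ENNReal.ofReal R * volume (ball x₀ R) * A) :
    ∫⁻ z, ENNReal.ofReal (exp (-dist y z ^ 2 / (c * r ^ 2))) * H z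
      ≤ ENNReal.ofReal (2 ^ (n + 1) * (volume (ball (0 : E) 1)).toReal * r ^ (n + 1)
          * ∑' k : ℕ, exp (-(2 ^ k - 1) ^ 2 / c) * (2 ^ (n + 1)) ^ k) * A := by
  set V := (volume (ball (0 : E) 1)).toReal
  set e : ℕ → ℝ := fun k => exp (-(2 ^ k - 1) ^ 2 / c)
  have hF : ∀ k z, z ∉ ball x₀ (2 ^ k * (2 * r)) →
      ENNReal.ofReal (exp (-dist y z ^ 2 / (c * r ^ 2))) ≤ ENNReal.ofReal (e (k + 1)) := by
    intro k z hz
    have hz' : 2 ^ (k + 1) * r ≤ dist z x₀ := by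
      rw [mem_ball, not_lt] at hz
      rw [pow_succ]
      linarith
    refine ENNReal.ofReal_le_ofReal (exp_neg_sq_div_le hc hr ?_ ?_)
    · linarith [one_le_pow₀ (M₀ := ℝ) one_le_two (n := k + 1)]
    · linarith [dist_triangle z y x₀, dist_comm z y]
  have hF₀ : ∀ z, ENNReal.ofReal (exp (-dist y z ^ 2 / (c * r ^ 2))) ≤ ENNReal.ofReal (e 0) :=
    fun z => ENNReal.ofReal_le_ofReal (exp_neg_sq_div_le hc hr (by norm_num) (by simp))
  have hvol : ∀ R, 0 < R → volume (ball x₀ R) = ENNReal.ofReal (R ^ n * V) := fun R hR => by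
    rw [Measure.addHaar_ball_of_pos _ _ hR, finrank_euclideanSpace_fin,
      ENNReal.ofReal_mul (by positivity), ENNReal.ofReal_toReal measure_ball_lt_top.ne]
  have hsum := summable_exp_neg_two_pow_sub_one_sq_div_mul_pow hc (2 ^ (n + 1))
  calc ∫⁻ z, ENNReal.ofReal (exp (-dist y z ^ 2 / (c * r ^ 2))) * H z
      ≤ ∑' k, ENNReal.ofReal (e k) * ∫⁻ z in ball x₀ (2 ^ k * (2 * r)), H z :=
        lintegral_mul_le_tsum_mul_setLIntegral_ball_two_pow volume x₀ (by positivity) hH hF₀ hF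
    _ ≤ ∑' k, ENNReal.ofReal (e k) * (ENNReal.ofReal (2 ^ k * (2 * r))
          * volume (ball x₀ (2 ^ k * (2 * r))) * A) := by
        gcongr with k
        exact hHball _ (le_mul_of_one_le_left (by positivity) (one_le_pow₀ one_le_two))
    _ = ∑' k, ENNReal.ofReal (2 ^ (n + 1) * V * r ^ (n + 1) * (e k * (2 ^ (n + 1)) ^ k)) * A := by
        congr 1 with k
        rw [hvol _ (by positivity), ← mul_assoc, ← mul_assoc, ← ENNReal.ofReal_mul (by positivity),
          ← ENNReal.ofReal_mul (by positivity)]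
        congr 2
        ring
    _ = ENNReal.ofReal (2 ^ (n + 1) * V * r ^ (n + 1) * ∑' k, e k * (2 ^ (n + 1)) ^ k) * A := by
        rw [ENNReal.tsum_mul_right, ← ENNReal.ofReal_tsum_of_nonneg
          (fun k => by positivity) (hsum.mul_left _), tsum_mul_left]

end Euclidean

/-- For a kernel with Gaussian bounds, pairing against the oscillation of a Lipschitz
function `φ` over `B(x₀,2r)` is controlled by `r · M(∇φ)(x₀)`. -/
theorem gaussian_kernel_poincare (n : ℕ) (C c : ℝ) (hC : 0 < C) (hc : 0 < c) :
    ∃ C' : ℝ, 0 < C' ∧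
      ∀ (K : ℝ → EuclideanSpace ℝ (Fin n) → EuclideanSpace ℝ (Fin n) → ℝ),
        (∀ t : ℝ, 0 < t → ∀ y z, |K t y z|
          ≤ C * t ^ (-(n : ℝ)) * Real.exp (-(dist y z) ^ 2 / (c * t ^ 2))) →
      ∀ (φ : EuclideanSpace ℝ (Fin n) → ℝ), ContDiff ℝ 1 φ →
        (∃ L : ℝ≥0, LipschitzWith L φ) →
        LocallyIntegrable (fun z => ‖fderiv ℝ φ z‖) volume →
      ∀ (x0 : EuclideanSpace ℝ (Fin n)) (r : ℝ), 0 < r →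
      ∀ y, dist y x0 ≤ r →
        ENNReal.ofReal |∫ z, K r y z * (φ z - ⨍ w in ball x0 (2 * r), φ w ∂volume)|
          ≤ ENNReal.ofReal (C' * r) * HLMaximal (fun z => ‖fderiv ℝ φ z‖) x0 := by
  set V := (volume (ball (0 : EuclideanSpace ℝ (Fin n)) 1)).toReal
  set S := ∑' k : ℕ, exp (-(2 ^ k - 1) ^ 2 / c) * (2 ^ (n + 1)) ^ k
  have hV : 0 < V := ENNReal.toReal_pos (measure_ball_pos _ _ one_pos).ne' measure_ball_lt_top.ne
  have hS : 0 < S := (summable_exp_neg_two_pow_sub_one_sq_div_mul_pow hc _).tsum_pos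
    (fun k => by positivity) 0 (by simp)
  refine ⟨2 ^ (n + 2) * C * V * S, by positivity, ?_⟩
  intro K hK φ hφ _ _ x0 r hr y hy
  have hKr : ∀ z, |K r y z| ≤ C * (r ^ n)⁻¹ * exp (-dist y z ^ 2 / (c * r ^ 2)) := fun z => by
    simpa only [Real.rpow_neg hr.le, Real.rpow_natCast] using hK r hr y z
  calc ENNReal.ofReal |∫ z, K r y z * (φ z - ⨍ w in ball x0 (2 * r), φ w)|
      ≤ ENNReal.ofReal (C * (r ^ n)⁻¹)
          * ∫⁻ z, ENNReal.ofReal (exp (-dist y z ^ 2 / (c * r ^ 2)))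
            * ENNReal.ofReal |φ z - ⨍ w in ball x0 (2 * r), φ w| := by
        rw [← lintegral_const_mul' _ _ ENNReal.ofReal_ne_top]
        refine (ofReal_abs_integral_mul_le_lintegral hKr).trans_eq (lintegral_congr fun z => ?_)
        rw [ENNReal.ofReal_mul (by positivity), mul_assoc]
    _ ≤ ENNReal.ofReal (C * (r ^ n)⁻¹) * (ENNReal.ofReal (2 ^ (n + 1) * V * r ^ (n + 1) * S)
          * (2 * HLMaximal (fun z => ‖fderiv ℝ φ z‖) x0)) := by
        gcongr
        exact lintegral_exp_neg_dist_sq_mul_le hc hr hy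
          (hφ.continuous.sub continuous_const).abs.measurable.ennreal_ofReal
          fun R hR => setLIntegral_ball_abs_sub_setAverage_le hφ x0 (by positivity) hR
    _ = ENNReal.ofReal (2 ^ (n + 2) * C * V * S * r) * HLMaximal (fun z => ‖fderiv ℝ φ z‖) x0 := by
        rw [← mul_assoc, ← mul_assoc, ← ENNReal.ofReal_mul (by positivity)]
        congr 1
        rw [← ENNReal.ofReal_ofNat 2, ← ENNReal.ofReal_mul (by positivity)]
        congr 1
        field_simp
        ring
end
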